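/- Let S be a numerical monoid. Then P_fin,0(S) has no absolutely irreducible elements: for every atom A of P_fin,0(S) there exists N ∈ ℕ such that the N-fold sumset NA admits a factorization into atoms of P_fin,0(S) that is not (as a multiset of atoms) equal to N copies of A; i.e., there is a finite multiset of atoms of P_fin,0(S) whose sum is NA and which differs from the multiset consisting of A taken N times. -/

import Mathlib

/-!
Let `a = max A > 0`. For large `n` the sumset `(n + 2)A` equals `{0, 2a} + nA`: the sets `nA`
eventually contain every element of the monoid generated by `A` lying a bounded distance below
`n a`, and reflecting `A` to `a - A` gives the same near the top, `n a`. Every element of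
`P_fin,0(S)` factors into atoms, since a proper summand of a set is a proper subset of it, so a
factorization of `nA` followed by the atom `{0, 2a}` factors `(n + 2)A`; and `{0, 2a} ≠ A` as
`2a > max A`.
-/

open Pointwise

/-- The restricted power monoid `P_fin,0(S)`: finite subsets of `S` containing `0`. -/
def Pfin0 (S : AddSubmonoid ℕ) : Set (Finset ℕ) :=
  {A | 0 ∈ A ∧ (A : Set ℕ) ⊆ (S : Set ℕ)}

/-- Atoms of `P_fin,0(S)`. -/
def IsAtom0 (S : AddSubmonoid ℕ) (U : Finset ℕ) : Prop :=
  U ∈ Pfin0 S ∧ U ≠ {0} ∧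
    ∀ B ∈ Pfin0 S, ∀ C ∈ Pfin0 S, U = B + C → B = {0} ∨ C = {0}

/-- The `n`-fold sumset `nA` of a finite set `A ⊆ ℕ` (with `0A = {0}`). -/
def nfold (A : Finset ℕ) : ℕ → Finset ℕ
  | 0 => {0}
  | n + 1 => nfold A n + A

section nfold

variable {A : Finset ℕ} {a : ℕ}

lemma zero_mem_nfold (h0 : 0 ∈ A) : ∀ n, 0 ∈ nfold A n
  | 0 => Finset.mem_singleton_self 0
  | n + 1 => Finset.add_mem_add (zero_mem_nfold h0 n) h0

lemma nfold_one : nfold A 1 = A := zero_add A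

lemma nfold_add (m n : ℕ) : nfold A (m + n) = nfold A m + nfold A n := by
  induction n with
  | zero => exact (add_zero _).symm
  | succ n ih => rw [← add_assoc, nfold, nfold, ih, add_assoc]

lemma nfold_mono (h0 : 0 ∈ A) {m n : ℕ} (h : m ≤ n) : nfold A m ⊆ nfold A n := by
  obtain ⟨k, rfl⟩ := Nat.exists_eq_add_of_le h
  rw [nfold_add]
  intro x hx
  simpa using Finset.add_mem_add hx (zero_mem_nfold h0 k)

lemma mul_mem_nfold (ha : a ∈ A) : ∀ j, j * a ∈ nfold A j
  | 0 => by simp [nfold]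
  | j + 1 => by
      rw [add_mul, one_mul]
      exact Finset.add_mem_add (mul_mem_nfold ha j) ha

lemma le_mul_of_mem_nfold (hmax : ∀ x ∈ A, x ≤ a) :
    ∀ {n x}, x ∈ nfold A n → x ≤ n * a
  | 0, x, hx => by simp_all [nfold]
  | n + 1, _, hx => by
      obtain ⟨y, hy, z, hz, rfl⟩ := Finset.mem_add.mp hx
      have := le_mul_of_mem_nfold hmax hy
      have := hmax z hz
      rw [add_mul, one_mul]
      omega

lemma mem_closure_of_mem_nfold : ∀ {n x}, x ∈ nfold A n → x ∈ AddSubmonoid.closure (A : Set ℕ)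
  | 0, x, hx => by simp_all [nfold]
  | n + 1, _, hx => by
      obtain ⟨y, hy, z, hz, rfl⟩ := Finset.mem_add.mp hx
      exact add_mem (mem_closure_of_mem_nfold hy) (AddSubmonoid.subset_closure hz)

lemma mem_nfold_self (h0 : 0 ∈ A) {y : ℕ} (hy : y ∈ AddSubmonoid.closure (A : Set ℕ)) :
    y ∈ nfold A y := by
  induction hy using AddSubmonoid.closure_induction with
  | mem b hb =>
      rcases Nat.eq_zero_or_pos b with rfl | hb0
      · exact zero_mem_nfold h0 0
      · exact nfold_mono h0 hb0 (nfold_one ▸ hb)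
  | zero => exact zero_mem_nfold h0 0
  | add x y _ _ hx hy => rw [nfold_add]; exact Finset.add_mem_add hx hy

lemma mem_nfold_image_sub_iff (hmax : ∀ x ∈ A, x ≤ a) {n x : ℕ} :
    x ∈ nfold (A.image (a - ·)) n ↔ ∃ y ∈ nfold A n, x + y = n * a := by
  induction n generalizing x with
  | zero => simp [nfold]
  | succ n ih =>
    simp only [nfold, Finset.mem_add, Finset.mem_image, ih]
    constructor
    · rintro ⟨u, ⟨y, hy, huy⟩, _, ⟨z, hz, rfl⟩, rfl⟩
      have := hmax z hz
      exact ⟨y + z, ⟨y, hy, z, hz, rfl⟩, by rw [add_mul]; omega⟩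
    · rintro ⟨_, ⟨y, hy, z, hz, rfl⟩, hx⟩
      have := le_mul_of_mem_nfold hmax hy
      have := hmax z hz
      rw [add_mul] at hx
      exact ⟨n * a - y, ⟨y, hy, by omega⟩, a - z, ⟨z, hz, rfl⟩, by omega⟩

/-- Write `y = z + j a` with `z` least in its residue class modulo `a` within the monoid; then
`y ∈ (z + j)A`, and `z` is bounded independently of `y`. -/
lemma exists_forall_mem_nfold_of_mem_closure (h0 : 0 ∈ A) (ha : a ∈ A) (hapos : 0 < a) :
    ∃ K, ∀ n y, y ∈ AddSubmonoid.closure (A : Set ℕ) → y + K ≤ n * a → y ∈ nfold A n := by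
  set least : ℕ → ℕ := fun r => sInf {w | w ∈ AddSubmonoid.closure (A : Set ℕ) ∧ w % a = r}
  refine ⟨a * (Finset.range a).sup least, fun n y hy hyn => ?_⟩
  obtain ⟨hz, hzy_mod⟩ : least (y % a) ∈ AddSubmonoid.closure (A : Set ℕ) ∧
      least (y % a) % a = y % a :=
    Nat.sInf_mem (s := {w | w ∈ AddSubmonoid.closure (A : Set ℕ) ∧ w % a = y % a}) ⟨y, hy, rfl⟩
  have hzy : least (y % a) ≤ y := Nat.sInf_le ⟨hy, rfl⟩
  have hzL : least (y % a) ≤ (Finset.range a).sup least :=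
    Finset.le_sup (Finset.mem_range.mpr (Nat.mod_lt _ hapos))
  obtain ⟨j, hj⟩ := (Nat.modEq_iff_dvd' hzy).mp hzy_mod
  have hyj : y = least (y % a) + j * a := by rw [mul_comm]; omega
  have hjn : least (y % a) + j ≤ n := by
    have : (j + (Finset.range a).sup least) * a ≤ n * a := by nlinarith
    have := Nat.le_of_mul_le_mul_right this hapos
    omega
  have hy' := Finset.add_mem_add (mem_nfold_self h0 hz) (mul_mem_nfold ha j)
  rw [← nfold_add, ← hyj] at hy'
  exact nfold_mono h0 hjn hy'

lemma exists_pair_add_nfold_eq (h0 : 0 ∈ A) (ha : a ∈ A) (hmax : ∀ x ∈ A, x ≤ a)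
    (hapos : 0 < a) : ∃ n, ({0, 2 * a} : Finset ℕ) + nfold A n = nfold A (n + 2) := by
  set A' := A.image (a - ·)
  obtain ⟨K, hK⟩ := exists_forall_mem_nfold_of_mem_closure h0 ha hapos
  obtain ⟨K', hK'⟩ := exists_forall_mem_nfold_of_mem_closure (a := a)
    (Finset.mem_image.mpr ⟨a, ha, Nat.sub_self a⟩) (Finset.mem_image.mpr ⟨0, h0, Nat.sub_zero a⟩)
    hapos
  obtain ⟨n, hKn⟩ : ∃ n, K + K' + 2 * a ≤ n := ⟨_, le_rfl⟩
  refine ⟨n, subset_antisymm ?_ fun x hx => ?_⟩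
  · rw [add_comm n, nfold_add]
    refine Finset.add_subset_add (Finset.insert_subset (zero_mem_nfold h0 2) ?_) subset_rfl
    exact Finset.singleton_subset_iff.mpr (mul_mem_nfold ha 2)
  have hn : n ≤ n * a := Nat.le_mul_of_pos_right n hapos
  have htop : (n + 2) * a = n * a + 2 * a := by ring
  by_cases hlow : x + K ≤ n * a
  · simpa using Finset.add_mem_add (Finset.mem_insert_self 0 {2 * a})
      (hK n x (mem_closure_of_mem_nfold hx) hlow)
  · -- `x` is near the top of `(n + 2)A`, so `(n + 2) a - x` is near the bottom of `(n + 2)A'`.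
    have hxle := le_mul_of_mem_nfold hmax hx
    have ht : (n + 2) * a - x ∈ nfold A' (n + 2) :=
      (mem_nfold_image_sub_iff hmax).mpr ⟨x, hx, by omega⟩
    obtain ⟨y, hy, hxy⟩ := (mem_nfold_image_sub_iff hmax).mp
      (hK' n _ (mem_closure_of_mem_nfold ht) (by omega))
    exact Finset.mem_add.mpr
      ⟨2 * a, Finset.mem_insert_of_mem (Finset.mem_singleton_self _), y, hy, by omega⟩

end nfold

lemma Finset.ssubset_add_of_ne_singleton_zero {B C : Finset ℕ} (hB : B.Nonempty) (hC0 : 0 ∈ C)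
    (hC : C ≠ {0}) : B ⊂ B + C := by
  obtain ⟨c, hc, hc0⟩ : ∃ c ∈ C, c ≠ 0 := by
    by_contra! h
    exact hC (Finset.eq_singleton_iff_unique_mem.mpr ⟨hC0, h⟩)
  refine (Finset.ssubset_iff_of_subset fun b hb => ?_).mpr
    ⟨B.max' hB + c, Finset.add_mem_add (B.max'_mem hB) hc, fun h => ?_⟩
  · simpa using Finset.add_mem_add hb hC0
  · have := B.le_max' _ h
    omega

section Pfin0

variable {S : AddSubmonoid ℕ}

lemma add_mem_Pfin0 {B C : Finset ℕ} (hB : B ∈ Pfin0 S) (hC : C ∈ Pfin0 S) :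
    B + C ∈ Pfin0 S := by
  refine ⟨by simpa using Finset.add_mem_add hB.1 hC.1, fun x hx => ?_⟩
  obtain ⟨b, hb, c, hc, rfl⟩ := Finset.mem_add.mp hx
  exact S.add_mem (hB.2 hb) (hC.2 hc)

lemma nfold_mem_Pfin0 {A : Finset ℕ} (hA : A ∈ Pfin0 S) : ∀ n, nfold A n ∈ Pfin0 S
  | 0 => ⟨Finset.mem_singleton_self 0, by simp [nfold]⟩
  | n + 1 => add_mem_Pfin0 (nfold_mem_Pfin0 hA n) hA

lemma isAtom0_of_card_eq_two {U : Finset ℕ} (hU : U ∈ Pfin0 S) (hcard : U.card = 2) :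
    IsAtom0 S U := by
  refine ⟨hU, fun h => by simp [h] at hcard, fun B hB C hC hBC => ?_⟩
  by_contra! hne
  have hlt := Finset.card_lt_card
    (hBC ▸ Finset.ssubset_add_of_ne_singleton_zero ⟨0, hB.1⟩ hC.1 hne.2)
  exact hne.1 (Finset.eq_singleton_iff_unique_mem.mpr
    ⟨hB.1, fun x hx => Finset.card_le_one.mp (by omega) x hx 0 hB.1⟩)

lemma exists_multiset_isAtom0_sum_eq {U : Finset ℕ} (hU : U ∈ Pfin0 S) :
    ∃ m : Multiset (Finset ℕ), (∀ V ∈ m, IsAtom0 S V) ∧ m.sum = U := by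
  induction U using Finset.strongInduction with
  | H U ih =>
    by_cases hU0 : U = {0}
    · exact ⟨0, by simp, hU0.symm⟩
    by_cases hUat : IsAtom0 S U
    · exact ⟨{U}, by simpa using hUat, Multiset.sum_singleton U⟩
    obtain ⟨B, hB, C, hC, rfl, hB0, hC0⟩ :
        ∃ B ∈ Pfin0 S, ∃ C ∈ Pfin0 S, U = B + C ∧ B ≠ {0} ∧ C ≠ {0} := by
      simpa [IsAtom0, hU, hU0] using hUat
    obtain ⟨mB, hmB, rfl⟩ :=
      ih B (Finset.ssubset_add_of_ne_singleton_zero ⟨0, hB.1⟩ hC.1 hC0) hB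
    obtain ⟨mC, hmC, rfl⟩ :=
      ih C (add_comm C _ ▸ Finset.ssubset_add_of_ne_singleton_zero ⟨0, hC.1⟩ hB.1 hB0) hC
    exact ⟨mB + mC, fun V hV => (Multiset.mem_add.mp hV).elim (hmB V) (hmC V),
      Multiset.sum_add mB mC⟩

end Pfin0

theorem no_absolutely_irreducible_general (S : AddSubmonoid ℕ)
    (A : Finset ℕ) (hA : IsAtom0 S A) :
    ∃ N : ℕ, ∃ m : Multiset (Finset ℕ),
      (∀ U ∈ m, IsAtom0 S U) ∧ m.sum = nfold A N ∧
      m ≠ Multiset.replicate N A := by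
  obtain ⟨⟨h0, hAS⟩, hA0, -⟩ := hA
  set a := A.max' ⟨0, h0⟩
  have hmax : ∀ x ∈ A, x ≤ a := fun x hx => A.le_max' x hx
  have hapos : 0 < a := by
    by_contra! ha
    exact hA0 (Finset.eq_singleton_iff_unique_mem.mpr
      ⟨h0, fun x hx => by have := hmax x hx; omega⟩)
  have hpair : IsAtom0 S {0, 2 * a} := by
    refine isAtom0_of_card_eq_two ⟨Finset.mem_insert_self _ _, ?_⟩ (Finset.card_pair (by omega))
    rw [Finset.coe_pair, Set.insert_subset_iff, Set.singleton_subset_iff, two_mul]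
    exact ⟨S.zero_mem, S.add_mem (hAS (A.max'_mem _)) (hAS (A.max'_mem _))⟩
  obtain ⟨n, hn⟩ := exists_pair_add_nfold_eq h0 (A.max'_mem _) hmax hapos
  obtain ⟨m, hm, hsum⟩ := exists_multiset_isAtom0_sum_eq (nfold_mem_Pfin0 ⟨h0, hAS⟩ n)
  refine ⟨n + 2, {0, 2 * a} ::ₘ m, ?_, by rw [Multiset.sum_cons, hsum, hn], fun h => ?_⟩
  · exact Multiset.forall_mem_cons.mpr ⟨hpair, hm⟩
  · have h2a : 2 * a ∈ A :=
      Multiset.eq_of_mem_replicate (h ▸ Multiset.mem_cons_self _ _) ▸ (by simp)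
    have := hmax _ h2a
    omega

/-- `P_fin,0(S)` has no absolutely irreducible elements: for every atom `A` some
power `NA` has a factorization into atoms which is not `N` copies of `A`. -/
theorem no_absolutely_irreducible (S : AddSubmonoid ℕ)
    (hfin : ((S : Set ℕ)ᶜ).Finite) (A : Finset ℕ) (hA : IsAtom0 S A) :
    ∃ N : ℕ, ∃ m : Multiset (Finset ℕ),
      (∀ U ∈ m, IsAtom0 S U) ∧ m.sum = nfold A N ∧
      m ≠ Multiset.replicate N A :=
  no_absolutely_irreducible_general S A hA
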